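/- (Lemma of Appendix C: block-Lipschitz constant of the graph objective with the proposed regularizer.) Assume μ₂ = μ₁ ≥ 0, λ > 0, δ > 0. Fix k ∈ [K] and 𝒦 ⊆ [K]\{k} with |𝒦| = κ ≥ 1, and let w, w' ∈ ℝ^{K(K−1)/2} with w ≥ 0 and w' ≥ 0 that agree on every coordinate outside the block {(k,l) : l ∈ 𝒦}. Then ‖[∇h(w)]_{k,𝒦} − [∇h(w')]_{k,𝒦}‖₂ ≤ μ₁·( (κ+1)/δ² + 2λ )·‖w_{k,𝒦} − w'_{k,𝒦}‖₂, where w_{k,𝒦} = (w_{k,l})_{l∈𝒦} and [∇h(w)]_{k,𝒦} is the subvector of the gradient of h on the coordinates {(k,l) : l ∈ 𝒦}. -/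

import Mathlib

open scoped BigOperators

/-- Coordinates are indexed by unordered pairs of distinct elements of `[K]`,
represented as ordered pairs `(i,j)` with `i < j`; there are `K(K−1)/2` of them. -/
abbrev PairIdx (K : ℕ) := {q : Fin K × Fin K // q.1 < q.2}

/-- Weight vectors live in `ℝ^{K(K−1)/2}` with the Euclidean structure. -/
abbrev GVec (K : ℕ) := EuclideanSpace ℝ (PairIdx K)

/-- Degree of user `k`: `d_k(w) = Σ_{l≠k} w_{k,l}`. -/
noncomputable def deg {K : ℕ} (w : GVec K) (k : Fin K) : ℝ :=
  ∑ q : PairIdx K, (if q.1.1 = k ∨ q.1.2 = k then w q else 0)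

/-- The graph objective
`h(w) = Σ_{k<l} w_{k,l}(p_{k,l} + (μ₁/2)Δ_{k,l}) + μ₂(λ‖w‖² − Σ_k log(d_k(w) + δ))`. -/
noncomputable def hObj {K : ℕ} (P Δ : Fin K → Fin K → ℝ) (μ₁ μ₂ lam δ : ℝ)
    (w : GVec K) : ℝ :=
  (∑ q : PairIdx K, w q * (P q.1.1 q.1.2 + μ₁ / 2 * Δ q.1.1 q.1.2))
    + μ₂ * (lam * (∑ q : PairIdx K, (w q) ^ 2)
        - ∑ k : Fin K, Real.log (deg w k + δ))

/-- The coordinate `{i,j}` belongs to the block `(k,𝒦)` iff it is of the form `{k,l}`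
with `l ∈ 𝒦`. -/
def inBlk {K : ℕ} (k : Fin K) (S : Finset (Fin K)) (q : PairIdx K) : Prop :=
  (q.1.1 = k ∧ q.1.2 ∈ S) ∨ (q.1.2 = k ∧ q.1.1 ∈ S)

instance {K : ℕ} (k : Fin K) (S : Finset (Fin K)) (q : PairIdx K) :
    Decidable (inBlk k S q) := by
  unfold inBlk; infer_instance

/-- Restriction of a vector to the coordinates of the block `(k,𝒦)` (zeroing the others),
so that its Euclidean norm is the ℓ2 norm of the subvector `[v]_{k,𝒦}`. -/
noncomputable def blkRestr {K : ℕ} (k : Fin K) (S : Finset (Fin K)) (v : GVec K) :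
    GVec K :=
  WithLp.toLp 2 (fun q => if inBlk k S q then v q else 0)

/-!
Where all degrees are positive, the gradient of `h` at the pair `{i,j}` is
`c_{ij} + μ (2λ w_{ij} − 1/(d_i + δ) − 1/(d_j + δ))`. On the block `(k,𝒦)` the gradient
difference thus splits into `2λ (w − w')`, a term constant along the block coming from `d_k`, and,
at `{k,l}`, a term coming from `d_l`. As `w` and `w'` differ only on the block,
`d_l − d'_l = w_{kl} − w'_{kl}` for `l ∈ 𝒦` and `d_k − d'_k = Σ_{l ∈ 𝒦} (w_{kl} − w'_{kl})`.
Together with `|1/(a + δ) − 1/(b + δ)| ≤ |a − b|/δ²` for `a, b ≥ 0` and Cauchy–Schwarz, the `d_k`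
term contributes at most `κ/δ²` and the `d_l` terms at most `1/δ²` times `‖w_{k,𝒦} − w'_{k,𝒦}‖`.
-/

open scoped RealInnerProductSpace

lemma abs_inv_add_sub_inv_add_le {a b δ : ℝ} (ha : 0 ≤ a) (hb : 0 ≤ b) (hδ : 0 < δ) :
    |(a + δ)⁻¹ - (b + δ)⁻¹| ≤ (δ ^ 2)⁻¹ * |a - b| := by
  have hab : δ ^ 2 ≤ (a + δ) * (b + δ) := by nlinarith
  rw [inv_sub_inv (by positivity) (by positivity), abs_div, abs_sub_comm,
    abs_of_pos (by positivity : 0 < (a + δ) * (b + δ)), div_eq_inv_mul, add_sub_add_right_eq_sub]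
  gcongr

lemma EuclideanSpace.norm_le_norm_of_abs_le {ι : Type*} [Fintype ι] {x y : EuclideanSpace ℝ ι}
    (h : ∀ i, |x i| ≤ |y i|) : ‖x‖ ≤ ‖y‖ := by
  rw [← sq_le_sq₀ (norm_nonneg x) (norm_nonneg y), EuclideanSpace.real_norm_sq_eq,
    EuclideanSpace.real_norm_sq_eq]
  exact Finset.sum_le_sum fun i _ => sq_le_sq.mpr (h i)

lemma pair_eq_of_endpoints {K : ℕ} {a b : Fin K} (hab : a ≠ b) {q q' : PairIdx K}
    (ha : q.1.1 = a ∨ q.1.2 = a) (hb : q.1.1 = b ∨ q.1.2 = b)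
    (ha' : q'.1.1 = a ∨ q'.1.2 = a) (hb' : q'.1.1 = b ∨ q'.1.2 = b) : q = q' := by
  obtain ⟨⟨i, j⟩, hij⟩ := q
  obtain ⟨⟨i', j'⟩, hij'⟩ := q'
  change i < j at hij
  change i' < j' at hij'
  simp only [Fin.ext_iff, ne_eq, Subtype.mk.injEq, Prod.mk.injEq] at *
  omega

def incVec {K : ℕ} (m : Fin K) : GVec K :=
  WithLp.toLp 2 fun q => if q.1.1 = m ∨ q.1.2 = m then 1 else 0

lemma deg_eq_inner {K : ℕ} (w : GVec K) (m : Fin K) : deg w m = ⟪incVec m, w⟫ := by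
  simp [deg, incVec, PiLp.inner_apply]

lemma deg_sub {K : ℕ} (w w' : GVec K) (m : Fin K) : deg (w - w') m = deg w m - deg w' m := by
  simp only [deg_eq_inner, inner_sub_right]

lemma deg_nonneg {K : ℕ} {w : GVec K} (hw : ∀ q, 0 ≤ w q) (m : Fin K) : 0 ≤ deg w m :=
  Finset.sum_nonneg fun q _ => by split_ifs <;> simp [hw]

lemma sum_smul_incVec_apply {K : ℕ} (a : Fin K → ℝ) (q : PairIdx K) :
    (∑ m, a m • incVec m) q = a q.1.1 + a q.1.2 := by
  have hq : q.1.1 ≠ q.1.2 := q.2.ne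
  have hsplit : ∀ m, (if q.1.1 = m ∨ q.1.2 = m then a m else 0)
      = (if q.1.1 = m then a m else 0) + (if q.1.2 = m then a m else 0) := by
    intro m
    by_cases h1 : q.1.1 = m <;> by_cases h2 : q.1.2 = m <;> simp_all
  simp [incVec, hsplit, Finset.sum_add_distrib]

noncomputable def costVec {K : ℕ} (P Δ : Fin K → Fin K → ℝ) (μ₁ : ℝ) : GVec K :=
  WithLp.toLp 2 fun q => P q.1.1 q.1.2 + μ₁ / 2 * Δ q.1.1 q.1.2

noncomputable def invDeg {K : ℕ} (δ : ℝ) (w : GVec K) (m : Fin K) : ℝ :=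
  (deg w m + δ)⁻¹

lemma abs_invDeg_sub_le {K : ℕ} {δ : ℝ} (hδ : 0 < δ) {w w' : GVec K} (hw : ∀ q, 0 ≤ w q)
    (hw' : ∀ q, 0 ≤ w' q) (m : Fin K) :
    |invDeg δ w m - invDeg δ w' m| ≤ (δ ^ 2)⁻¹ * |deg (w - w') m| := by
  rw [deg_sub]
  exact abs_inv_add_sub_inv_add_le (deg_nonneg hw m) (deg_nonneg hw' m) hδ

lemma hObj_eq {K : ℕ} (P Δ : Fin K → Fin K → ℝ) (μ₁ μ₂ lam δ : ℝ) :
    hObj P Δ μ₁ μ₂ lam δ = fun w =>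
      ⟪costVec P Δ μ₁, w⟫ + μ₂ * (lam * ‖w‖ ^ 2 - ∑ m, Real.log (⟪incVec m, w⟫ + δ)) := by
  funext w
  simp_rw [← deg_eq_inner, EuclideanSpace.real_norm_sq_eq]
  simp [hObj, costVec, PiLp.inner_apply, mul_comm]

lemma hasGradientAt_hObj {K : ℕ} (P Δ : Fin K → Fin K → ℝ) (μ₁ μ₂ lam δ : ℝ) {w : GVec K}
    (hw : ∀ m, deg w m + δ ≠ 0) :
    HasGradientAt (hObj P Δ μ₁ μ₂ lam δ)
      (costVec P Δ μ₁ + μ₂ • ((2 * lam) • w - ∑ m, invDeg δ w m • incVec m)) w := by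
  have hlog : ∀ m, HasFDerivAt (fun v : GVec K => Real.log (⟪incVec m, v⟫ + δ))
      (invDeg δ w m • innerSL ℝ (incVec m)) w := fun m => by
    have hm := hw m
    rw [invDeg, deg_eq_inner] at *
    exact ((innerSL ℝ (incVec m)).hasFDerivAt.add_const δ).log hm
  have hderiv := (innerSL ℝ (costVec P Δ μ₁)).hasFDerivAt.add
    ((((hasStrictFDerivAt_norm_sq w).hasFDerivAt.const_mul lam).sub
      (HasFDerivAt.fun_sum (u := Finset.univ) fun m _ => hlog m)).const_mul μ₂)
  rw [hasGradientAt_iff_hasFDerivAt, hObj_eq]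
  refine hderiv.congr_fderiv ?_
  ext v
  simp only [map_add, map_smul, map_sub, map_sum, add_apply, smul_apply, sub_apply,
    FunLike.coe_sum, Finset.sum_apply, InnerProductSpace.toDual_apply_apply, innerSL_apply_apply,
    smul_eq_mul]
  ring

lemma gradient_hObj_apply {K : ℕ} (P Δ : Fin K → Fin K → ℝ) (μ₁ μ₂ lam : ℝ) {δ : ℝ}
    (hδ : 0 < δ) {w : GVec K} (hw : ∀ q, 0 ≤ w q) (q : PairIdx K) :
    gradient (hObj P Δ μ₁ μ₂ lam δ) w q = costVec P Δ μ₁ q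
      + μ₂ * (2 * lam * w q - (invDeg δ w q.1.1 + invDeg δ w q.1.2)) := by
  have hdeg : ∀ m, deg w m + δ ≠ 0 := fun m => (add_pos_of_nonneg_of_pos (deg_nonneg hw m) hδ).ne'
  rw [(hasGradientAt_hObj P Δ μ₁ μ₂ lam δ hdeg).gradient]
  simp [sum_smul_incVec_apply]

-- The endpoint of `q` other than `k`; it is `q.1.1` when `q` does not contain `k`.
def partner {K : ℕ} (k : Fin K) (q : PairIdx K) : Fin K :=
  if q.1.1 = k then q.1.2 else q.1.1

noncomputable def blkInd {K : ℕ} (k : Fin K) (S : Finset (Fin K)) : GVec K :=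
  WithLp.toLp 2 fun q => if inBlk k S q then 1 else 0

section Block

variable {K : ℕ} {k : Fin K} {S : Finset (Fin K)} {q : PairIdx K}

lemma blkRestr_apply (v : GVec K) (q : PairIdx K) :
    blkRestr k S v q = if inBlk k S q then v q else 0 := rfl

lemma inBlk.touches (h : inBlk k S q) : q.1.1 = k ∨ q.1.2 = k := by
  rcases h with h | h
  exacts [Or.inl h.1, Or.inr h.1]

lemma inBlk.partner_mem (h : inBlk k S q) : partner k q ∈ S := by
  have hq : q.1.1 ≠ q.1.2 := q.2.ne
  unfold partner
  rcases h with ⟨h1, h2⟩ | ⟨h1, h2⟩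
  · simpa [h1] using h2
  · simpa [h1 ▸ hq] using h2

lemma touches_partner (k : Fin K) (q : PairIdx K) :
    q.1.1 = partner k q ∨ q.1.2 = partner k q := by
  unfold partner
  split_ifs <;> simp

lemma partner_ne (h : q.1.1 = k ∨ q.1.2 = k) : partner k q ≠ k := by
  have hq : q.1.1 ≠ q.1.2 := q.2.ne
  unfold partner
  split_ifs with h1
  · exact h1 ▸ hq.symm
  · exact h.resolve_left h1 ▸ h1

lemma add_eq_add_partner (f : Fin K → ℝ) (h : q.1.1 = k ∨ q.1.2 = k) :
    f q.1.1 + f q.1.2 = f k + f (partner k q) := by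
  unfold partner
  rcases h with h | h
  · simp [h]
  · by_cases h1 : q.1.1 = k
    · simp [h1]
    · simp [h1, h, add_comm]

lemma card_filter_inBlk_le : (Finset.univ.filter (inBlk k S)).card ≤ S.card := by
  refine Finset.card_le_card_of_injOn (partner k)
    (fun q hq => (Finset.mem_filter.1 hq).2.partner_mem) ?_
  intro q hq q' hq' hqq'
  have hq := (Finset.mem_filter.1 hq).2.touches
  have hq' := (Finset.mem_filter.1 hq').2.touches
  exact pair_eq_of_endpoints (partner_ne hq).symm hq (touches_partner k q) hq'
    (hqq' ▸ touches_partner k q')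

lemma norm_blkInd_sq_le : ‖blkInd k S‖ ^ 2 ≤ S.card := by
  rw [EuclideanSpace.real_norm_sq_eq]
  calc ∑ q, (blkInd k S q) ^ 2 = (Finset.univ.filter (inBlk k S)).card := by
        simp [blkInd]
    _ ≤ S.card := by exact_mod_cast card_filter_inBlk_le

lemma deg_blkRestr_self (v : GVec K) :
    deg (blkRestr k S v) k = ⟪blkInd k S, blkRestr k S v⟫ := by
  simp only [deg, PiLp.inner_apply, blkInd, blkRestr_apply]
  refine Finset.sum_congr rfl fun q _ => ?_
  by_cases hq : inBlk k S q
  · simp [hq, hq.touches]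
  · simp [hq]

lemma deg_blkRestr_partner (v : GVec K) (h : inBlk k S q) :
    deg (blkRestr k S v) (partner k q) = v q := by
  rw [deg, Finset.sum_eq_single q]
  · simp [blkRestr_apply, h, touches_partner]
  · intro q' _ hq'
    rw [blkRestr_apply]
    split_ifs with ht hb
    · exact absurd (pair_eq_of_endpoints (partner_ne h.touches).symm hb.touches ht h.touches
        (touches_partner k q)) hq'
    all_goals rfl
  · simp

lemma blkRestr_sub_eq_self {w w' : GVec K} (hagree : ∀ q, ¬ inBlk k S q → w q = w' q) :
    blkRestr k S (w - w') = w - w' := by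
  ext q
  by_cases hq : inBlk k S q
  · simp [blkRestr_apply, hq]
  · simp [blkRestr_apply, hq, hagree q hq]

lemma norm_smul_blkInd_le {c C : ℝ} (hC : 0 ≤ C) (v : GVec K)
    (hc : |c| ≤ C * |deg (blkRestr k S v) k|) :
    ‖c • blkInd k S‖ ≤ C * S.card * ‖blkRestr k S v‖ := by
  rw [norm_smul, Real.norm_eq_abs, deg_blkRestr_self] at *
  calc |c| * ‖blkInd k S‖
      ≤ C * (‖blkInd k S‖ * ‖blkRestr k S v‖) * ‖blkInd k S‖ := by
        gcongr
        exact hc.trans (by gcongr; exact abs_real_inner_le_norm _ _)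
    _ = C * ‖blkInd k S‖ ^ 2 * ‖blkRestr k S v‖ := by ring
    _ ≤ C * S.card * ‖blkRestr k S v‖ := by gcongr; exact norm_blkInd_sq_le

lemma norm_blkRestr_comp_partner_le {f : Fin K → ℝ} {C : ℝ} (hC : 0 ≤ C) (v : GVec K)
    (hf : ∀ m, |f m| ≤ C * |deg (blkRestr k S v) m|) :
    ‖blkRestr k S (WithLp.toLp 2 fun q => f (partner k q))‖ ≤ C * ‖blkRestr k S v‖ := by
  rw [← abs_of_nonneg hC, ← Real.norm_eq_abs, ← norm_smul]
  refine EuclideanSpace.norm_le_norm_of_abs_le fun q => ?_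
  by_cases hq : inBlk k S q
  · have := hf (partner k q)
    simpa [blkRestr_apply, hq, abs_mul, deg_blkRestr_partner v hq, abs_of_nonneg hC] using this
  · simp [blkRestr_apply, hq]

lemma blkRestr_gradient_hObj_sub (P Δ : Fin K → Fin K → ℝ) (μ₁ μ₂ lam : ℝ) {δ : ℝ} (hδ : 0 < δ)
    {w w' : GVec K} (hw : ∀ q, 0 ≤ w q) (hw' : ∀ q, 0 ≤ w' q) :
    blkRestr k S (gradient (hObj P Δ μ₁ μ₂ lam δ) w - gradient (hObj P Δ μ₁ μ₂ lam δ) w')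
      = μ₂ • ((2 * lam) • blkRestr k S (w - w') - (invDeg δ w - invDeg δ w') k • blkInd k S
          - blkRestr k S (WithLp.toLp 2 fun q => (invDeg δ w - invDeg δ w') (partner k q))) := by
  ext q
  by_cases hq : inBlk k S q
  · simp only [blkRestr_apply, hq, if_true, blkInd, PiLp.sub_apply, PiLp.smul_apply,
      gradient_hObj_apply P Δ μ₁ μ₂ lam hδ hw, gradient_hObj_apply P Δ μ₁ μ₂ lam hδ hw',
      add_eq_add_partner _ hq.touches, Pi.sub_apply, smul_eq_mul]
    ring
  · simp [blkRestr_apply, blkInd, hq]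

end Block

theorem graph_objective_block_lipschitz_general
    (K : ℕ)
    (P Δ : Fin K → Fin K → ℝ)
    (μ₁ lam δ : ℝ) (hμ₁ : 0 ≤ μ₁) (hlam : 0 < lam) (hδ : 0 < δ)
    (k : Fin K) (S : Finset (Fin K)) (κ : ℕ) (hcard : S.card = κ)
    (w w' : GVec K) (hw : ∀ q, 0 ≤ w q) (hw' : ∀ q, 0 ≤ w' q)
    (hagree : ∀ q, ¬ inBlk k S q → w q = w' q) :
    ‖blkRestr k S (gradient (hObj P Δ μ₁ μ₁ lam δ) w
        - gradient (hObj P Δ μ₁ μ₁ lam δ) w')‖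
      ≤ μ₁ * (((κ : ℝ) + 1) / δ ^ 2 + 2 * lam) * ‖blkRestr k S (w - w')‖ := by
  have hD : ∀ m, |(invDeg δ w - invDeg δ w') m|
      ≤ (δ ^ 2)⁻¹ * |deg (blkRestr k S (w - w')) m| := fun m => by
    rw [blkRestr_sub_eq_self hagree]
    exact abs_invDeg_sub_le hδ hw hw' m
  have hC : 0 ≤ (δ ^ 2)⁻¹ := by positivity
  have hdegk := norm_smul_blkInd_le hC (w - w') (hD k)
  have hdegl := norm_blkRestr_comp_partner_le hC (w - w') hD
  rw [blkRestr_gradient_hObj_sub P Δ μ₁ μ₁ lam hδ hw hw', norm_smul, Real.norm_of_nonneg hμ₁,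
    ← hcard]
  set u := blkRestr k S (w - w')
  set D := invDeg δ w - invDeg δ w'
  set z := blkRestr k S (WithLp.toLp 2 fun q => D (partner k q))
  calc μ₁ * ‖(2 * lam) • u - D k • blkInd k S - z‖
      ≤ μ₁ * (‖(2 * lam) • u‖ + ‖D k • blkInd k S‖ + ‖z‖) := by
        gcongr
        exact (norm_sub_le _ _).trans (add_le_add_left (norm_sub_le _ _) _)
    _ ≤ μ₁ * (2 * lam * ‖u‖ + (δ ^ 2)⁻¹ * S.card * ‖u‖ + (δ ^ 2)⁻¹ * ‖u‖) := by
        rw [norm_smul, Real.norm_of_nonneg (by positivity)]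
        gcongr
    _ = μ₁ * (((S.card : ℝ) + 1) / δ ^ 2 + 2 * lam) * ‖u‖ := by ring

/-- Block-Lipschitz constant of the graph objective with the proposed
regularizer (Appendix C): with `μ₂ = μ₁`, for `w, w' ≥ 0` agreeing outside the block
`(k,𝒦)`, `‖[∇h(w)]_{k,𝒦} − [∇h(w')]_{k,𝒦}‖ ≤ μ₁((κ+1)/δ² + 2λ)‖w_{k,𝒦} − w'_{k,𝒦}‖`. -/
theorem graph_objective_block_lipschitz
    (K : ℕ) (hK : 2 ≤ K)
    (P Δ : Fin K → Fin K → ℝ) (hP : ∀ k l, 0 ≤ P k l) (hΔ : ∀ k l, 0 ≤ Δ k l)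
    (μ₁ lam δ : ℝ) (hμ₁ : 0 ≤ μ₁) (hlam : 0 < lam) (hδ : 0 < δ)
    (k : Fin K) (S : Finset (Fin K)) (hkS : k ∉ S) (κ : ℕ) (hcard : S.card = κ)
    (hκ : 1 ≤ κ)
    (w w' : GVec K) (hw : ∀ q, 0 ≤ w q) (hw' : ∀ q, 0 ≤ w' q)
    (hagree : ∀ q, ¬ inBlk k S q → w q = w' q) :
    ‖blkRestr k S (gradient (hObj P Δ μ₁ μ₁ lam δ) w
        - gradient (hObj P Δ μ₁ μ₁ lam δ) w')‖
      ≤ μ₁ * (((κ : ℝ) + 1) / δ ^ 2 + 2 * lam) * ‖blkRestr k S (w - w')‖ :=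
  graph_objective_block_lipschitz_general K P Δ μ₁ lam δ hμ₁ hlam hδ k S κ hcard w w' hw hw' hagree
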